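/- For all x ≥ 0, erf(x) ≥ (2x/√π)·exp(−x²/3). -/

import Mathlib

/-!
Since `exp` lies above its tangent line at `0`, for every `c` and `t`
`exp (-t²) = exp (-c) * exp (c - t²) ≥ exp (-c) * (1 + c - t²)`.
Integrating over `[0, x]` gives `∫₀ˣ exp (-t²) ≥ x (1 + c - x²/3) exp (-c)`,
and the choice `c = x²/3` makes the polynomial factor equal to `1`.
-/

/-- The Gauss error function `erf x = (2/√π) ∫₀ˣ e^{-t²} dt`. -/
noncomputable def erf (x : ℝ) : ℝ :=
  (2 / Real.sqrt Real.pi) * ∫ t in (0 : ℝ)..x, Real.exp (-t ^ 2)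

open Real intervalIntegral

lemma exp_neg_mul_one_add_sub_sq_le (c t : ℝ) :
    exp (-c) * (1 + c - t ^ 2) ≤ exp (-t ^ 2) :=
  calc exp (-c) * (1 + c - t ^ 2)
      ≤ exp (-c) * exp (c - t ^ 2) := by
        gcongr
        linarith [add_one_le_exp (c - t ^ 2)]
    _ = exp (-t ^ 2) := by rw [← exp_add]; ring_nf

lemma integral_one_add_sub_sq (c x : ℝ) :
    ∫ t in (0 : ℝ)..x, (1 + c - t ^ 2) = x * (1 + c - x ^ 2 / 3) := by
  rw [integral_sub intervalIntegrable_const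
    ((continuous_pow 2).intervalIntegrable _ _), integral_const, integral_pow]
  simp only [smul_eq_mul]
  ring

lemma mul_exp_neg_le_integral_exp_neg_sq (c : ℝ) {x : ℝ} (hx : 0 ≤ x) :
    x * (1 + c - x ^ 2 / 3) * exp (-c) ≤ ∫ t in (0 : ℝ)..x, exp (-t ^ 2) :=
  calc x * (1 + c - x ^ 2 / 3) * exp (-c)
      = ∫ t in (0 : ℝ)..x, exp (-c) * (1 + c - t ^ 2) := by
        rw [integral_const_mul, integral_one_add_sub_sq]; ring
    _ ≤ ∫ t in (0 : ℝ)..x, exp (-t ^ 2) :=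
        integral_mono_on hx ((by fun_prop : Continuous _).intervalIntegrable _ _)
          ((by fun_prop : Continuous _).intervalIntegrable _ _)
          fun t _ ↦ exp_neg_mul_one_add_sub_sq_le c t

theorem stmt_9 (x : ℝ) (hx : 0 ≤ x) :
    erf x ≥ (2 * x / Real.sqrt Real.pi) * Real.exp (-x ^ 2 / 3) := by
  have key := mul_exp_neg_le_integral_exp_neg_sq (x ^ 2 / 3) hx
  rw [show 1 + x ^ 2 / 3 - x ^ 2 / 3 = 1 by ring, mul_one] at key
  calc (2 * x / sqrt π) * exp (-x ^ 2 / 3)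
      = 2 / sqrt π * (x * exp (-(x ^ 2 / 3))) := by ring_nf
    _ ≤ erf x := by unfold erf; gcongr
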